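/- arXiv:1303.2069 — 4 statements merged into one kernel-verified Lean document; each statement's English description precedes it below -/
import Mathlib

section
/- Suppose N² = (N - d)(N + e) with N, d, e positive integers, N > d, and c ≥ 1 a real number with d ≤ c√N, e ≤ c√N, and N ≥ 4c². Then there exist positive integers μ, x, y with 2N = μxy, 2(N - d) = μx², 2(N + e) = μy², 1 ≤ y - x ≤ 2c, and μ ≤ 4c². -/
set_option maxHeartbeats 1000000

theorem stmt_6 (N d e : ℕ) (c : ℝ) (hc : 1 ≤ c) (hN : 0 < N) (hd : 0 < d)
    (he : 0 < e) (hdN : d < N) (h : N ^ 2 = (N - d) * (N + e))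
    (hdc : (d : ℝ) ≤ c * Real.sqrt N) (hec : (e : ℝ) ≤ c * Real.sqrt N)
    (hNc : 4 * c ^ 2 ≤ (N : ℝ)) :
    ∃ mu x y : ℕ, 0 < mu ∧ 0 < x ∧ 0 < y ∧
      2 * N = mu * x * y ∧ 2 * (N - d) = mu * x ^ 2 ∧ 2 * (N + e) = mu * y ^ 2 ∧
      x < y ∧ ((y : ℝ) - x ≤ 2 * c) ∧ (mu : ℝ) ≤ 4 * c ^ 2 := by
  have hA : 0 < N - d := by omega
  have hB : 0 < N + e := by omega
  have hAB : (N - d) * (N + e) = N ^ 2 := h.symm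
  set A := N - d with hA_def
  set B := N + e with hB_def
  set g := Nat.gcd A B with hg_def
  have hg : 0 < g := Nat.gcd_pos_of_pos_left _ hA
  obtain ⟨a, ha⟩ : g ∣ A := Nat.gcd_dvd_left _ _
  obtain ⟨b, hb⟩ : g ∣ B := Nat.gcd_dvd_right _ _
  have hcop : Nat.Coprime a b := by
    have h1 : A / g = a := by rw [ha, Nat.mul_div_cancel_left _ hg]
    have h2 : B / g = b := by rw [hb, Nat.mul_div_cancel_left _ hg]
    rw [← h1, ← h2]
    exact Nat.coprime_div_gcd_div_gcd hg
  have hgN : g ∣ N := by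
    have h2 : g ^ 2 ∣ N ^ 2 := by
      rw [← hAB, pow_two]
      exact mul_dvd_mul (Nat.gcd_dvd_left _ _) (Nat.gcd_dvd_right _ _)
    exact (Nat.pow_dvd_pow_iff two_ne_zero).mp h2
  obtain ⟨n, hn⟩ := hgN
  have hnab : a * b = n ^ 2 := by
    have hh : g ^ 2 * (a * b) = g ^ 2 * n ^ 2 := by
      calc g ^ 2 * (a * b) = (g * a) * (g * b) := by ring
        _ = A * B := by rw [ha, hb]
        _ = N ^ 2 := hAB
        _ = (g * n) ^ 2 := by rw [hn]
        _ = g ^ 2 * n ^ 2 := by ring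
    exact Nat.eq_of_mul_eq_mul_left (by positivity) hh
  have ha0 : 0 < a := by
    rcases Nat.eq_zero_or_pos a with h0 | h0
    · exfalso; rw [h0, mul_zero] at ha; omega
    · exact h0
  have hb0 : 0 < b := by
    rcases Nat.eq_zero_or_pos b with h0 | h0
    · exfalso; rw [h0, mul_zero] at hb; omega
    · exact h0
  have hcopZ : IsCoprime (a : ℤ) (b : ℤ) := Nat.isCoprime_iff_coprime.mpr hcop
  obtain ⟨x, hx⟩ := Int.sq_of_isCoprime hcopZ (c := (n : ℤ)) (by exact_mod_cast hnab)
  have hax : a = x.natAbs ^ 2 := by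
    rcases hx with hx | hx
    · have := congrArg Int.natAbs hx
      simpa [Int.natAbs_pow] using this
    · exfalso
      have h1 : (0:ℤ) < a := by exact_mod_cast ha0
      nlinarith [sq_nonneg x]
  obtain ⟨y, hy⟩ := Int.sq_of_isCoprime hcopZ.symm (c := (n : ℤ))
    (by rw [mul_comm]; exact_mod_cast hnab)
  have hby : b = y.natAbs ^ 2 := by
    rcases hy with hy | hy
    · have := congrArg Int.natAbs hy
      simpa [Int.natAbs_pow] using this
    · exfalso
      have h1 : (0:ℤ) < b := by exact_mod_cast hb0
      nlinarith [sq_nonneg y]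
  set X := x.natAbs with hX
  set Y := y.natAbs with hY
  have hXpos : 0 < X := by
    rcases Nat.eq_zero_or_pos X with h0 | h0
    · rw [h0] at hax; simp at hax; omega
    · exact h0
  have hYpos : 0 < Y := by
    rcases Nat.eq_zero_or_pos Y with h0 | h0
    · rw [h0] at hby; simp at hby; omega
    · exact h0
  have hnXY : n = X * Y := by
    have h2 : n ^ 2 = (X * Y) ^ 2 := by rw [← hnab, hax, hby]; ring
    exact Nat.pow_left_injective (by norm_num) h2
  -- three key equations
  have eq1 : 2 * N = (2 * g) * X * Y := by rw [hn, hnXY]; ring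
  have eq2 : 2 * A = (2 * g) * X ^ 2 := by rw [ha, hax]; ring
  have eq3 : 2 * B = (2 * g) * Y ^ 2 := by rw [hb, hby]; ring
  -- X < Y
  have hXY : X < Y := by
    have hab' : a < b := by
      have hlt : g * a < g * b := by rw [← ha, ← hb]; omega
      exact Nat.lt_of_mul_lt_mul_left hlt
    have hsq : X ^ 2 < Y ^ 2 := by rw [← hax, ← hby]; exact hab'
    exact lt_of_pow_lt_pow_left₀ 2 (Nat.zero_le _) hsq
  -- key nat identity: N * e = d * N + d * e
  have hNe : N * e = d * N + d * e := by
    have hz : (N : ℤ) ^ 2 = ((N : ℤ) - d) * ((N : ℤ) + e) := by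
      have hh := h
      simp only [hA_def, hB_def] at hh
      zify [hdN.le] at hh
      exact hh
    have : (N : ℤ) * e = (d : ℤ) * N + d * e := by linear_combination -hz
    exact_mod_cast this
  -- real versions
  have re1 : 2 * (N : ℝ) = (2 * (g:ℝ)) * X * Y := by exact_mod_cast eq1
  have re2 : 2 * ((N : ℝ) - d) = (2 * (g:ℝ)) * X ^ 2 := by
    have := congrArg (fun t : ℕ => (t : ℝ)) eq2
    simp only [hA_def] at this
    push_cast [hdN.le] at this
    linarith [this]
  have re3 : 2 * ((N : ℝ) + e) = (2 * (g:ℝ)) * Y ^ 2 := by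
    have := congrArg (fun t : ℕ => (t : ℝ)) eq3
    simp only [hB_def] at this
    push_cast at this
    linarith [this]
  have key : (2 * (g:ℝ)) * ((Y : ℝ) - X) ^ 2 = 2 * ((e : ℝ) - d) := by
    linear_combination 2*re1 - re2 - re3
  have hsqrt : Real.sqrt N ^ 2 = N := Real.sq_sqrt (by positivity)
  have hed : (e : ℝ) - d ≤ c ^ 2 := by
    have hNer : (N : ℝ) * e = (d:ℝ) * N + d * e := by exact_mod_cast hNe
    have hdr : (0:ℝ) ≤ d := by positivity
    have her : (0:ℝ) ≤ e := by positivity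
    have hmul : (d : ℝ) * e ≤ c ^ 2 * N := by
      calc (d:ℝ) * e ≤ (c * Real.sqrt N) * (c * Real.sqrt N) :=
            mul_le_mul hdc hec her (by positivity)
        _ = c ^ 2 * (Real.sqrt N ^ 2) := by ring
        _ = c ^ 2 * N := by rw [hsqrt]
    have hNr : (0:ℝ) < N := by exact_mod_cast hN
    have h5 : (N:ℝ) * e - N * d ≤ N * c ^ 2 := by linarith
    have h6 : (N:ℝ) * ((e:ℝ) - d) ≤ (N:ℝ) * c ^ 2 := by
      have hr : (N:ℝ) * ((e:ℝ) - d) = N * e - N * d := by ring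
      rw [hr]; exact h5
    exact le_of_mul_le_mul_left h6 hNr
  have hYX1 : (1 : ℝ) ≤ (Y : ℝ) - X := by
    have hle : X + 1 ≤ Y := hXY
    have := (Nat.cast_le (α := ℝ)).mpr hle
    push_cast at this
    linarith
  have hgr1 : (1 : ℝ) ≤ 2 * (g : ℝ) := by
    have hle : (1:ℝ) ≤ (g:ℝ) := by exact_mod_cast hg
    linarith
  refine ⟨2 * g, X, Y, by positivity, hXpos, hYpos, eq1, eq2, eq3, hXY, ?_, ?_⟩
  · have hsq : ((Y : ℝ) - X) ^ 2 ≤ 2 * c ^ 2 := by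
      nlinarith [mul_nonneg (by linarith : (0:ℝ) ≤ 2 * (g:ℝ) - 1)
        (sq_nonneg ((Y:ℝ) - X)), key, hed]
    nlinarith [hsq, hYX1, hc]
  · have hcast : ((2 * g : ℕ) : ℝ) = 2 * (g : ℝ) := by push_cast; ring
    rw [hcast]
    have hyx2 : (1:ℝ) ≤ ((Y:ℝ) - X) ^ 2 := by nlinarith [hYX1]
    have hmono : 2 * (g:ℝ) ≤ 2 * (g:ℝ) * ((Y:ℝ) - X) ^ 2 :=
      le_mul_of_one_le_right (by linarith) hyx2
    have hcc : (1:ℝ) ≤ c ^ 2 := by nlinarith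
    linarith [key, hed]
end

section
/- Let M be a positive integer and c ≥ 1 a real number with M > (2c)⁴. If x₁ < y₁ and x₂ < y₂ are positive integers with x₁y₁ = x₂y₂ = M, y₁ - x₁ ≤ 2c, y₂ - x₂ ≤ 2c, and x₁ ≠ x₂, then we obtain a contradiction; that is, any two factorizations of M into factors differing by at most 2c must have equal smaller factors. -/
/-!
Writing `s = x + y` and `d = y - x` for a factorization `M = x y`, we have `s² = d² + 4M`.
Hence two factorizations whose gaps are at most `D` have `|s'² - s²| ≤ D²`, while `s > 2√M > 2D²`
when `D⁴ < M`; two distinct integers that large have squares at least `2s + 1 > D²` apart.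
So the sums agree, and a factorization `x ≤ y` is determined by its sum and product.
-/

theorem Nat.add_le_of_mul_eq_of_sub_le {D : ℝ} {x y x' y' : ℕ} (hxy' : x' ≤ y')
    (hM : x' * y' = x * y) (hD : D ^ 4 < (x * y : ℕ)) (hg' : (y' : ℝ) - x' ≤ D) :
    x' + y' ≤ x + y := by
  by_contra! hlt
  have hlt : (x : ℝ) + y + 1 ≤ x' + y' := by exact_mod_cast hlt
  have hsq : ((x : ℝ) + y) ^ 2 = ((y : ℝ) - x) ^ 2 + 4 * (x * y : ℕ) := by push_cast; ring
  have hsq' : ((x' : ℝ) + y') ^ 2 = ((y' : ℝ) - x') ^ 2 + 4 * (x * y : ℕ) := by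
    rw [← hM]; push_cast; ring
  have hd' : 0 ≤ (y' : ℝ) - x' := sub_nonneg.mpr (by exact_mod_cast hxy')
  have hgap : ((y' : ℝ) - x') ^ 2 ≤ D ^ 2 := pow_le_pow_left₀ hd' hg' 2
  have hsum : 2 * D ^ 2 < (x : ℝ) + y :=
    lt_of_pow_lt_pow_left₀ 2 (by positivity) (by nlinarith [sq_nonneg ((y : ℝ) - x)])
  nlinarith [sq_nonneg D]

theorem Nat.eq_of_add_eq_of_mul_eq {x y x' y' : ℕ} (hxy : x ≤ y) (hxy' : x' ≤ y')
    (hs : x + y = x' + y') (hp : x * y = x' * y') : x = x' := by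
  nlinarith

theorem stmt_8_general (M : ℕ) (c : ℝ) (hM : (16 : ℝ) * c ^ 4 < M)
    (x₁ y₁ x₂ y₂ : ℕ)
    (h₁ : x₁ < y₁) (h₂ : x₂ < y₂) (hM₁ : x₁ * y₁ = M) (hM₂ : x₂ * y₂ = M)
    (hg₁ : (y₁ : ℝ) - x₁ ≤ 2 * c) (hg₂ : (y₂ : ℝ) - x₂ ≤ 2 * c)
    (hne : x₁ ≠ x₂) : False := by
  subst hM₂
  have hD : (2 * c) ^ 4 < (x₂ * y₂ : ℕ) := by linarith
  have hD' : (2 * c) ^ 4 < (x₁ * y₁ : ℕ) := by rwa [hM₁]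
  have hsum : x₁ + y₁ = x₂ + y₂ :=
    le_antisymm (Nat.add_le_of_mul_eq_of_sub_le h₁.le hM₁ hD hg₁)
      (Nat.add_le_of_mul_eq_of_sub_le h₂.le hM₁.symm hD' hg₂)
  exact hne (Nat.eq_of_add_eq_of_mul_eq h₁.le h₂.le hsum hM₁)

theorem stmt_8 (M : ℕ) (c : ℝ) (hc : 1 ≤ c) (hM : (16 : ℝ) * c ^ 4 < M)
    (x₁ y₁ x₂ y₂ : ℕ) (hx₁ : 0 < x₁) (hx₂ : 0 < x₂)
    (h₁ : x₁ < y₁) (h₂ : x₂ < y₂) (hM₁ : x₁ * y₁ = M) (hM₂ : x₂ * y₂ = M)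
    (hg₁ : (y₁ : ℝ) - x₁ ≤ 2 * c) (hg₂ : (y₂ : ℝ) - x₂ ≤ 2 * c)
    (hne : x₁ ≠ x₂) : False :=
  stmt_8_general M c hM x₁ y₁ x₂ y₂ h₁ h₂ hM₁ hM₂ hg₁ hg₂ hne
end

section
/- Suppose N, d₁, e₁, d₂, e₂ are positive integers with d₁ < d₂ < N, N² = (N - d₁)(N + e₁) = (N - d₂)(N + e₂), and suppose 2N = μ₁x₁y₁ = μ₂x₂y₂, 2(N - dᵢ) = μᵢxᵢ², 2(N + eᵢ) = μᵢyᵢ² for positive integers μᵢ, xᵢ, yᵢ (i = 1, 2) with yᵢ - xᵢ ≤ 2c and μᵢ ≤ 4c² for a real c ≥ 1. If N > 32c⁶, then μ₁ ≠ μ₂. -/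
/-!
With `s = x + y` and `t = y - x`, the relation `2N = μxy` reads `μ s² = μ t² + 8N`. If both
representations share `μ`, then `s₁² + t₂² = s₂² + t₁²`. Since `N` is large compared with `μ`,
each `s` exceeds `8c²`, while each `t` is at most `2c`; so `t²` is smaller than the gap `2s + 1`
between consecutive squares near `s²`, which forces `s₁ = s₂`, then `t₁ = t₂`, `x₁ = x₂` and
finally `d₁ = d₂`.
-/

lemma eq_of_sq_add_sq_eq {a b s t : ℕ} {r : ℝ} (h : a ^ 2 + t ^ 2 = b ^ 2 + s ^ 2)
    (hs : (s : ℝ) ^ 2 ≤ r) (ht : (t : ℝ) ^ 2 ≤ r) (ha : r < 2 * a) (hb : r < 2 * b) :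
    a = b := by
  have hR : (a : ℝ) ^ 2 + (t : ℝ) ^ 2 = (b : ℝ) ^ 2 + (s : ℝ) ^ 2 := by exact_mod_cast h
  rcases lt_trichotomy a b with hab | hab | hab
  · have : (a : ℝ) + 1 ≤ b := by exact_mod_cast hab
    nlinarith [sq_nonneg (s : ℝ)]
  · exact hab
  · have : (b : ℝ) + 1 ≤ a := by exact_mod_cast hab
    nlinarith [sq_nonneg (t : ℝ)]

section Representation

variable {N μ x y : ℕ}

lemma mul_add_sq_eq_mul_sub_sq_add (hxy : x ≤ y) (hN : 2 * N = μ * x * y) :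
    μ * (x + y) ^ 2 = μ * (y - x) ^ 2 + 8 * N := by
  obtain ⟨t, rfl⟩ := Nat.exists_eq_add_of_le hxy
  rw [Nat.add_sub_cancel_left, show 8 * N = 4 * (2 * N) by ring, hN]
  ring

lemma cast_sub_sq_le {c : ℝ} (hxy : x ≤ y) (hgap : (y : ℝ) - x ≤ 2 * c) :
    ((y - x : ℕ) : ℝ) ^ 2 ≤ (2 * c) ^ 2 := by
  rw [Nat.cast_sub hxy]
  exact pow_le_pow_left₀ (by simpa using hxy) hgap 2

lemma sq_lt_two_mul_cast_add {c : ℝ} (hbig : 32 * c ^ 6 < N) (hμ : (μ : ℝ) ≤ 4 * c ^ 2)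
    (hxy : x ≤ y) (hN : 2 * N = μ * x * y) : (2 * c) ^ 2 < 2 * ((x + y : ℕ) : ℝ) := by
  have hrep : (μ : ℝ) * ((x + y : ℕ) : ℝ) ^ 2 = μ * ((y - x : ℕ) : ℝ) ^ 2 + 8 * N := by
    exact_mod_cast mul_add_sq_eq_mul_sub_sq_add hxy hN
  have hs : (8 * c ^ 2) ^ 2 < ((x + y : ℕ) : ℝ) ^ 2 := by
    nlinarith [mul_le_mul_of_nonneg_right hμ (sq_nonneg ((x + y : ℕ) : ℝ)),
      mul_nonneg (Nat.cast_nonneg μ) (sq_nonneg ((y - x : ℕ) : ℝ))]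
  have hs' : 8 * c ^ 2 < ((x + y : ℕ) : ℝ) := lt_of_pow_lt_pow_left₀ 2 (by positivity) hs
  nlinarith [sq_nonneg c]

end Representation

theorem stmt_9_general (N d₁ e₁ d₂ e₂ μ₁ x₁ y₁ μ₂ x₂ y₂ : ℕ) (c : ℝ)
    (hpos : 0 < N ∧ 0 < d₁ ∧ 0 < e₁ ∧ 0 < d₂ ∧ 0 < e₂ ∧ 0 < μ₁ ∧ 0 < x₁ ∧
      0 < y₁ ∧ 0 < μ₂ ∧ 0 < x₂ ∧ 0 < y₂)
    (hd : d₁ < d₂) (hdN : d₂ < N)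
    (hN₁ : 2 * N = μ₁ * x₁ * y₁) (hN₂ : 2 * N = μ₂ * x₂ * y₂)
    (hx₁' : 2 * (N - d₁) = μ₁ * x₁ ^ 2) (hx₂' : 2 * (N - d₂) = μ₂ * x₂ ^ 2)
    (hlt₁ : x₁ < y₁) (hlt₂ : x₂ < y₂)
    (hg₁ : (y₁ : ℝ) - x₁ ≤ 2 * c) (hg₂ : (y₂ : ℝ) - x₂ ≤ 2 * c)
    (hμ₁ : (μ₁ : ℝ) ≤ 4 * c ^ 2) (hμ₂ : (μ₂ : ℝ) ≤ 4 * c ^ 2)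
    (hbig : (32 : ℝ) * c ^ 6 < N) : μ₁ ≠ μ₂ := by
  rintro rfl
  have hsum : (x₁ + y₁) ^ 2 + (y₂ - x₂) ^ 2 = (x₂ + y₂) ^ 2 + (y₁ - x₁) ^ 2 := by
    refine Nat.eq_of_mul_eq_mul_left hpos.2.2.2.2.2.1 ?_
    linarith [mul_add_sq_eq_mul_sub_sq_add hlt₁.le hN₁, mul_add_sq_eq_mul_sub_sq_add hlt₂.le hN₂]
  have hs : x₁ + y₁ = x₂ + y₂ := eq_of_sq_add_sq_eq hsum
    (cast_sub_sq_le hlt₁.le hg₁) (cast_sub_sq_le hlt₂.le hg₂)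
    (sq_lt_two_mul_cast_add hbig hμ₁ hlt₁.le hN₁) (sq_lt_two_mul_cast_add hbig hμ₂ hlt₂.le hN₂)
  have ht : y₂ - x₂ = y₁ - x₁ := by
    rw [hs] at hsum
    exact Nat.pow_left_injective two_ne_zero (Nat.add_left_cancel hsum)
  have hx : x₁ = x₂ := by omega
  have : 2 * (N - d₁) = 2 * (N - d₂) := by rw [hx₁', hx₂', hx]
  omega

theorem stmt_9 (N d₁ e₁ d₂ e₂ μ₁ x₁ y₁ μ₂ x₂ y₂ : ℕ) (c : ℝ) (hc : 1 ≤ c)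
    (hpos : 0 < N ∧ 0 < d₁ ∧ 0 < e₁ ∧ 0 < d₂ ∧ 0 < e₂ ∧ 0 < μ₁ ∧ 0 < x₁ ∧
      0 < y₁ ∧ 0 < μ₂ ∧ 0 < x₂ ∧ 0 < y₂)
    (hd : d₁ < d₂) (hdN : d₂ < N)
    (hsq₁ : N ^ 2 = (N - d₁) * (N + e₁)) (hsq₂ : N ^ 2 = (N - d₂) * (N + e₂))
    (hN₁ : 2 * N = μ₁ * x₁ * y₁) (hN₂ : 2 * N = μ₂ * x₂ * y₂)
    (hx₁' : 2 * (N - d₁) = μ₁ * x₁ ^ 2) (hx₂' : 2 * (N - d₂) = μ₂ * x₂ ^ 2)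
    (hy₁' : 2 * (N + e₁) = μ₁ * y₁ ^ 2) (hy₂' : 2 * (N + e₂) = μ₂ * y₂ ^ 2)
    (hlt₁ : x₁ < y₁) (hlt₂ : x₂ < y₂)
    (hg₁ : (y₁ : ℝ) - x₁ ≤ 2 * c) (hg₂ : (y₂ : ℝ) - x₂ ≤ 2 * c)
    (hμ₁ : (μ₁ : ℝ) ≤ 4 * c ^ 2) (hμ₂ : (μ₂ : ℝ) ≤ 4 * c ^ 2)
    (hbig : (32 : ℝ) * c ^ 6 < N) : μ₁ ≠ μ₂ :=
  stmt_9_general N d₁ e₁ d₂ e₂ μ₁ x₁ y₁ μ₂ x₂ y₂ c hpos hd hdN hN₁ hN₂ hx₁' hx₂' hlt₁ hlt₂ hg₁ hg₂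
    hμ₁ hμ₂ hbig
end

section
/- Let μ₁, x₁, c₁, μ₂, x₂, c₂ be positive integers with μ₁x₁(x₁ + c₁) = μ₂x₂(x₂ + c₂) and μ₁c₁² = μ₂c₂². Then μ₁x₁² = μ₂x₂². -/
/-!
With `K = μ₁c₁² = μ₂c₂²`, each `Aᵢ = μᵢxᵢ²` satisfies `Aᵢ K = (μᵢxᵢcᵢ)²`, and the first equation reads
`A₁ + μ₁x₁c₁ = A₂ + μ₂x₂c₂`. Since `A ↦ A + √(AK)` is strictly increasing, `A₁ = A₂`.
-/

section

variable {R : Type*} [CommSemiring R] [LinearOrder R] [IsStrictOrderedRing R] {a b p q k : R}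

theorem le_of_mul_eq_sq_of_add_eq (hk : 0 ≤ k) (hp : 0 ≤ p) (ha : a * k = p ^ 2)
    (hb : b * k = q ^ 2) (hsum : a + p = b + q) : a ≤ b := by
  by_contra! hba
  have hqp : q ≤ p :=
    le_of_pow_le_pow_left₀ two_ne_zero hp (hb ▸ ha ▸ mul_le_mul_of_nonneg_right hba.le hk)
  exact (add_lt_add_of_lt_of_le hba hqp).ne' hsum

theorem eq_of_mul_eq_sq_of_add_eq (hk : 0 ≤ k) (hp : 0 ≤ p) (hq : 0 ≤ q) (ha : a * k = p ^ 2)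
    (hb : b * k = q ^ 2) (hsum : a + p = b + q) : a = b :=
  le_antisymm (le_of_mul_eq_sq_of_add_eq hk hp ha hb hsum)
    (le_of_mul_eq_sq_of_add_eq hk hq hb ha hsum.symm)

end

theorem stmt_11_general (μ₁ x₁ c₁ μ₂ x₂ c₂ : ℕ)
    (h : μ₁ * x₁ * (x₁ + c₁) = μ₂ * x₂ * (x₂ + c₂))
    (h' : μ₁ * c₁ ^ 2 = μ₂ * c₂ ^ 2) : μ₁ * x₁ ^ 2 = μ₂ * x₂ ^ 2 := by
  refine eq_of_mul_eq_sq_of_add_eq (k := μ₁ * c₁ ^ 2) (p := μ₁ * x₁ * c₁) (q := μ₂ * x₂ * c₂)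
    (Nat.zero_le _) (Nat.zero_le _) (Nat.zero_le _) (by ring) ?_ (by linarith)
  rw [h']
  ring

theorem stmt_11 (μ₁ x₁ c₁ μ₂ x₂ c₂ : ℕ) (hμ₁ : 0 < μ₁) (hx₁ : 0 < x₁)
    (hc₁ : 0 < c₁) (hμ₂ : 0 < μ₂) (hx₂ : 0 < x₂) (hc₂ : 0 < c₂)
    (h : μ₁ * x₁ * (x₁ + c₁) = μ₂ * x₂ * (x₂ + c₂))
    (h' : μ₁ * c₁ ^ 2 = μ₂ * c₂ ^ 2) : μ₁ * x₁ ^ 2 = μ₂ * x₂ ^ 2 :=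
  stmt_11_general μ₁ x₁ c₁ μ₂ x₂ c₂ h h'
end
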